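/- The explicit matrix M(v) is the change-of-variables Jacobian dq/dw expressed in primitive variables: for every admissible primitive state v = (ρ, u₁, u₂, u₃, T) with ρ > 0 and T > 0, the 5×5 matrix identity M(v) · J_w(v) = J_q(v) holds, where J_w(v) and J_q(v) are the Jacobians (with respect to v) of the maps v ↦ w(v) and v ↦ q(v), respectively. In particular, for any differentiable field x ↦ v(x), M(v(x)) · d(w∘v)/dx = d(q∘v)/dx. -/

import Mathlib

open Matrix

noncomputable section

/-- Entropy variables `w(v)` for the perfect gas with `s = c_v log T - R log ρ`,
`h = c_p T`, `c_p = c_v + R`: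
`w = (h/T - s - |u|²/(2T), u₁/T, u₂/T, u₃/T, -1/T)`. -/
def entropyVars (R cv ρ u₁ u₂ u₃ T : ℝ) : Fin 5 → ℝ :=
  ![((cv + R) * T) / T - (cv * Real.log T - R * Real.log ρ)
      - (u₁ ^ 2 + u₂ ^ 2 + u₃ ^ 2) / (2 * T),
    u₁ / T, u₂ / T, u₃ / T, -(1 / T)]

/-- The symmetric 5×5 change-of-variables Jacobian `dq/dw` expressed in primitive
variables `v = (ρ, u₁, u₂, u₃, T)`, with gas constant `R` and heat capacity at
constant pressure `cp`. -/
def Mmat (R cp ρ u₁ u₂ u₃ T : ℝ) : Matrix (Fin 5) (Fin 5) ℝ :=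
  !![ρ / R, ρ * u₁ / R, ρ * u₂ / R, ρ * u₃ / R,
       ρ * (-2 * R * T + (u₁ ^ 2 + u₂ ^ 2 + u₃ ^ 2) + 2 * T * cp) / (2 * R);
     ρ * u₁ / R, ρ * (T + u₁ ^ 2 / R), ρ * u₁ * u₂ / R, ρ * u₁ * u₃ / R,
       ρ * u₁ * ((u₁ ^ 2 + u₂ ^ 2 + u₃ ^ 2) + 2 * T * cp) / (2 * R);
     ρ * u₂ / R, ρ * u₁ * u₂ / R, ρ * (T + u₂ ^ 2 / R), ρ * u₂ * u₃ / R,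
       ρ * u₂ * ((u₁ ^ 2 + u₂ ^ 2 + u₃ ^ 2) + 2 * T * cp) / (2 * R);
     ρ * u₃ / R, ρ * u₁ * u₃ / R, ρ * u₂ * u₃ / R, ρ * (T + u₃ ^ 2 / R),
       ρ * u₃ * ((u₁ ^ 2 + u₂ ^ 2 + u₃ ^ 2) + 2 * T * cp) / (2 * R);
     ρ * (-2 * R * T + (u₁ ^ 2 + u₂ ^ 2 + u₃ ^ 2) + 2 * T * cp) / (2 * R),
       ρ * u₁ * ((u₁ ^ 2 + u₂ ^ 2 + u₃ ^ 2) + 2 * T * cp) / (2 * R),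
       ρ * u₂ * ((u₁ ^ 2 + u₂ ^ 2 + u₃ ^ 2) + 2 * T * cp) / (2 * R),
       ρ * u₃ * ((u₁ ^ 2 + u₂ ^ 2 + u₃ ^ 2) + 2 * T * cp) / (2 * R),
       ρ * ((u₁ ^ 2 + u₂ ^ 2 + u₃ ^ 2) ^ 2
            + 4 * T * cp * (-(R * T) + (u₁ ^ 2 + u₂ ^ 2 + u₃ ^ 2) + T * cp)) / (4 * R)]

/-- Conservative variables `q(v) = (ρ, ρu₁, ρu₂, ρu₃, ρE)` with
`E = c_v T + |u|²/2`, as a map of the primitive state `v = (ρ, u₁, u₂, u₃, T)`. -/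
def consMap (cv : ℝ) (v : Fin 5 → ℝ) : Fin 5 → ℝ :=
  ![v 0, v 0 * v 1, v 0 * v 2, v 0 * v 3,
    v 0 * (cv * v 4 + ((v 1) ^ 2 + (v 2) ^ 2 + (v 3) ^ 2) / 2)]

/-- Entropy variables as a map of the primitive state `v = (ρ, u₁, u₂, u₃, T)`. -/
def entropyVarsMap (R cv : ℝ) (v : Fin 5 → ℝ) : Fin 5 → ℝ :=
  entropyVars R cv (v 0) (v 1) (v 2) (v 3) (v 4)

/-! Both Jacobians are explicit: differentiating `w` and `q` in the primitive variables gives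
rational matrices in `(ρ, u, T)` whose only denominators are powers of `ρ` and `T`. The identity
`M(v) J_w(v) = J_q(v)` is then a rational-function identity, checked entrywise after clearing
`R`, `ρ` and `T`; the statement along a curve is the chain rule. -/

def entropyVarsJacobian (R cv ρ u₁ u₂ u₃ T : ℝ) : Matrix (Fin 5) (Fin 5) ℝ :=
  !![R / ρ, -(u₁ / T), -(u₂ / T), -(u₃ / T),
       (u₁ ^ 2 + u₂ ^ 2 + u₃ ^ 2) / (2 * T ^ 2) - cv / T;
     0, 1 / T, 0, 0, -(u₁ / T ^ 2);
     0, 0, 1 / T, 0, -(u₂ / T ^ 2);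
     0, 0, 0, 1 / T, -(u₃ / T ^ 2);
     0, 0, 0, 0, 1 / T ^ 2]

def consMapJacobian (cv ρ u₁ u₂ u₃ T : ℝ) : Matrix (Fin 5) (Fin 5) ℝ :=
  !![1, 0, 0, 0, 0;
     u₁, ρ, 0, 0, 0;
     u₂, 0, ρ, 0, 0;
     u₃, 0, 0, ρ, 0;
     cv * T + (u₁ ^ 2 + u₂ ^ 2 + u₃ ^ 2) / 2, ρ * u₁, ρ * u₂, ρ * u₃, ρ * cv]

theorem Mmat_mul_entropyVarsJacobian {R cv ρ u₁ u₂ u₃ T : ℝ}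
    (hR : R ≠ 0) (hρ : ρ ≠ 0) (hT : T ≠ 0) :
    Mmat R (cv + R) ρ u₁ u₂ u₃ T * entropyVarsJacobian R cv ρ u₁ u₂ u₃ T
      = consMapJacobian cv ρ u₁ u₂ u₃ T := by
  ext i j
  fin_cases i <;> fin_cases j <;>
    simp [Mmat, entropyVarsJacobian, consMapJacobian, Matrix.mul_apply, Fin.sum_univ_five] <;>
    field_simp <;> ring

theorem HasFDerivAt.inv {𝕜 E : Type*} [NontriviallyNormedField 𝕜] [NormedAddCommGroup E]
    [NormedSpace 𝕜 E] {f : E → 𝕜} {f' : E →L[𝕜] 𝕜} {x : E}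
    (hf : HasFDerivAt f f' x) (hx : f x ≠ 0) :
    HasFDerivAt (fun y => (f y)⁻¹) (-(f x ^ 2)⁻¹ • f') x :=
  (hasDerivAt_inv hx).comp_hasFDerivAt x hf

theorem hasFDerivAt_entropyVarsMap (R cv : ℝ) {v : Fin 5 → ℝ}
    (hρ : v 0 ≠ 0) (hT : v 4 ≠ 0) :
    HasFDerivAt (entropyVarsMap R cv)
      (Matrix.toLin' (entropyVarsJacobian R cv (v 0) (v 1) (v 2) (v 3) (v 4))).toContinuousLinearMap
      v := by
  have hp (i : Fin 5) := hasFDerivAt_apply (𝕜 := ℝ) (F' := fun _ : Fin 5 => ℝ) i v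
  have hinvT := (hp 4).inv hT
  have hsq := ((hp 1).pow 2).fun_add ((hp 2).pow 2) |>.fun_add ((hp 3).pow 2)
  refine hasFDerivAt_pi'' fun i => ?_
  fin_cases i <;> [
    refine ((((hp 4).const_mul (cv + R)).mul hinvT).sub
      ((((hp 4).log hT).const_mul cv).sub (((hp 0).log hρ).const_mul R))).sub
      (hsq.mul (((hp 4).const_mul 2).inv (mul_ne_zero two_ne_zero hT))) |>.congr_fderiv ?_;
    refine ((hp 1).mul hinvT).congr_fderiv ?_;
    refine ((hp 2).mul hinvT).congr_fderiv ?_;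
    refine ((hp 3).mul hinvT).congr_fderiv ?_;
    -- `-(1 / T)` unfolds to `-(1 * T⁻¹)`, not to `-T⁻¹`
    refine (hinvT.const_mul 1).fun_neg.congr_fderiv ?_]
  all_goals
    refine ContinuousLinearMap.ext fun d => ?_
    simp [entropyVarsJacobian, dotProduct, Fin.sum_univ_five] <;> field_simp <;> ring

theorem hasFDerivAt_consMap (cv : ℝ) (v : Fin 5 → ℝ) :
    HasFDerivAt (consMap cv)
      (Matrix.toLin' (consMapJacobian cv (v 0) (v 1) (v 2) (v 3) (v 4))).toContinuousLinearMap
      v := by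
  have hp (i : Fin 5) := hasFDerivAt_apply (𝕜 := ℝ) (F' := fun _ : Fin 5 => ℝ) i v
  have hsq := ((hp 1).pow 2).fun_add ((hp 2).pow 2) |>.fun_add ((hp 3).pow 2)
  refine hasFDerivAt_pi'' fun i => ?_
  fin_cases i <;> [
    refine (hp 0).congr_fderiv ?_;
    refine ((hp 0).mul (hp 1)).congr_fderiv ?_;
    refine ((hp 0).mul (hp 2)).congr_fderiv ?_;
    refine ((hp 0).mul (hp 3)).congr_fderiv ?_;
    refine ((hp 0).mul (((hp 4).const_mul cv).add (hsq.mul_const 2⁻¹))).congr_fderiv ?_]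
  all_goals
    refine ContinuousLinearMap.ext fun d => ?_
    simp [consMapJacobian, dotProduct, Fin.sum_univ_five] <;> ring

theorem Mmat_is_dqdw_general
    (R cv : ℝ) (hR : 0 < R) :
    (∀ v : Fin 5 → ℝ, 0 < v 0 → 0 < v 4 →
      ∀ d : Fin 5 → ℝ,
        Mmat R (cv + R) (v 0) (v 1) (v 2) (v 3) (v 4) *ᵥ
            fderiv ℝ (entropyVarsMap R cv) v d
          = fderiv ℝ (consMap cv) v d) ∧
    (∀ (vf : ℝ → Fin 5 → ℝ) (x : ℝ), DifferentiableAt ℝ vf x →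
      0 < vf x 0 → 0 < vf x 4 →
        Mmat R (cv + R) (vf x 0) (vf x 1) (vf x 2) (vf x 3) (vf x 4) *ᵥ
            deriv (fun y => entropyVarsMap R cv (vf y)) x
          = deriv (fun y => consMap cv (vf y)) x) := by
  have mulVec_eq (v : Fin 5 → ℝ) (hρ : 0 < v 0) (hT : 0 < v 4) (d : Fin 5 → ℝ) :
      Mmat R (cv + R) (v 0) (v 1) (v 2) (v 3) (v 4) *ᵥ
          (entropyVarsJacobian R cv (v 0) (v 1) (v 2) (v 3) (v 4) *ᵥ d)
        = consMapJacobian cv (v 0) (v 1) (v 2) (v 3) (v 4) *ᵥ d := by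
    rw [mulVec_mulVec, Mmat_mul_entropyVarsJacobian hR.ne' hρ.ne' hT.ne']
  refine ⟨fun v hρ hT d => ?_, fun vf x hvf hρ hT => ?_⟩
  · rw [(hasFDerivAt_entropyVarsMap R cv hρ.ne' hT.ne').fderiv, (hasFDerivAt_consMap cv v).fderiv]
    exact mulVec_eq v hρ hT d
  · have hw : HasDerivAt (fun y => entropyVarsMap R cv (vf y)) _ x :=
      (hasFDerivAt_entropyVarsMap R cv hρ.ne' hT.ne').comp_hasDerivAt x hvf.hasDerivAt
    have hq : HasDerivAt (fun y => consMap cv (vf y)) _ x :=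
      (hasFDerivAt_consMap cv (vf x)).comp_hasDerivAt x hvf.hasDerivAt
    rw [hw.deriv, hq.deriv]
    exact mulVec_eq (vf x) hρ hT (deriv vf x)

/-- the explicit matrix `M(v)` is the change-of-variables Jacobian
`dq/dw` expressed in primitive variables: for every admissible state `v`
(`ρ > 0`, `T > 0`), `M(v) · J_w(v) = J_q(v)` (stated as an identity of linear
maps applied to an arbitrary direction `d`); in particular, for any
differentiable field `x ↦ v(x)`, `M(v(x)) · d(w∘v)/dx = d(q∘v)/dx`. -/
theorem Mmat_is_dqdw
    (R cv : ℝ) (hR : 0 < R) (hcv : 0 < cv) :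
    (∀ v : Fin 5 → ℝ, 0 < v 0 → 0 < v 4 →
      ∀ d : Fin 5 → ℝ,
        Mmat R (cv + R) (v 0) (v 1) (v 2) (v 3) (v 4) *ᵥ
            fderiv ℝ (entropyVarsMap R cv) v d
          = fderiv ℝ (consMap cv) v d) ∧
    (∀ (vf : ℝ → Fin 5 → ℝ) (x : ℝ), DifferentiableAt ℝ vf x →
      0 < vf x 0 → 0 < vf x 4 →
        Mmat R (cv + R) (vf x 0) (vf x 1) (vf x 2) (vf x 3) (vf x 4) *ᵥ
            deriv (fun y => entropyVarsMap R cv (vf y)) x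
          = deriv (fun y => consMap cv (vf y)) x) :=
  Mmat_is_dqdw_general R cv hR
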